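/- Let T₁, T₂ be labeled trees. For nodes u ∈ T₁ and v ∈ T₂, MAST satisfies the recurrence: mast(T₁^u, T₂^v) = max over: (a) max_{x ∈ C(v)} mast(T₁^u, T₂^x); (b) max_{x ∈ C(u)} mast(T₁^x, T₂^v); (c) the weight of a maximum weight matching of the bipartite graph G_{uv} between C(u) and C(v) with edge (x,y) weighted mast(T₁^x, T₂^y), plus 1 if u and v are labeled with the same symbol (and plus 0 if both are unlabeled; option (c) is unavailable if u,v have different labels or exactly one is labeled). -/

import Mathlib

/-!
An agreement set `M` below `(u, v)` is closed under pairs of LCAs, so it has a topmost pair.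
If that pair is not `(u, v)`, all of `M` lies below one child of `u` or of `v`: cases (a), (b).
If it is `(u, v)`, every other pair lies in a block `T₁^x × T₂^y` with `x ∈ C(u)`, `y ∈ C(v)`;
the LCA condition at `(u, v)` says that two pairs separate in `T₁` exactly when they separate
in `T₂`, so the nonempty blocks form a matching of `G_{uv}`, and `M` is bounded by (c).
Conversely, optimal agreement sets below the edges of a maximum weight matching, together with
`(u, v)`, form an agreement set: pairs from different edges have `(u, v)` as their pair of LCAs.
-/

open Finset

/-- A finite rooted tree on vertex set `V`, given by its root and parent function. -/
structure RTree (V : Type*) where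
  root : V
  parent : V → V
  parent_root : parent root = root
  reaches_root : ∀ v, ∃ n, parent^[n] v = root

variable {V₁ V₂ L : Type*} [Fintype V₁] [DecidableEq V₁] [Fintype V₂] [DecidableEq V₂]

open scoped Classical in
/-- The set of children of `u`. -/
noncomputable def RTree.children {V : Type*} [Fintype V] [DecidableEq V]
    (T : RTree V) (u : V) : Finset V :=
  Finset.univ.filter fun v => T.parent v = u ∧ v ≠ u

open scoped Classical in
/-- The subtree rooted at `u`. -/
noncomputable def RTree.subtree {V : Type*} [Fintype V] [DecidableEq V]
    (T : RTree V) (u : V) : Finset V :=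
  Finset.univ.filter fun v => ∃ k, T.parent^[k] v = u

/-- `a` is an ancestor of `b` (possibly `a = b`). -/
def RTree.anc {V : Type*} (T : RTree V) (a b : V) : Prop := ∃ k, T.parent^[k] b = a

/-- `c` is the least common ancestor of `a` and `b`. -/
def RTree.IsLCA {V : Type*} (T : RTree V) (c a b : V) : Prop :=
  T.anc c a ∧ T.anc c b ∧ ∀ c', T.anc c' a → T.anc c' b → T.anc c' c

/-- `M` encodes an agreement subtree of `T₁` and `T₂` (a label-preserving homeomorphic
common subtree): a partial one-to-one correspondence between nodes of `T₁` and `T₂`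
preserving labels and least common ancestors in both directions. -/
def AgreementPairs (T₁ : RTree V₁) (T₂ : RTree V₂)
    (lab₁ : V₁ → Option L) (lab₂ : V₂ → Option L) (M : Finset (V₁ × V₂)) : Prop :=
  (∀ p ∈ M, ∀ q ∈ M, p ≠ q → p.1 ≠ q.1 ∧ p.2 ≠ q.2) ∧
  (∀ p ∈ M, lab₁ p.1 = lab₂ p.2) ∧
  (∀ p ∈ M, ∀ q ∈ M, ∀ r ∈ M, (T₁.IsLCA r.1 p.1 q.1 ↔ T₂.IsLCA r.2 p.2 q.2)) ∧
  (∀ p ∈ M, ∀ q ∈ M, ∀ c c', T₁.IsLCA c p.1 q.1 → T₂.IsLCA c' p.2 q.2 → (c, c') ∈ M)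

open scoped Classical in
/-- `mast u v` : the maximum number of labeled nodes of an agreement subtree of
`T₁^u` and `T₂^v`. -/
noncomputable def mast (T₁ : RTree V₁) (T₂ : RTree V₂)
    (lab₁ : V₁ → Option L) (lab₂ : V₂ → Option L) (u : V₁) (v : V₂) : ℕ :=
  ((Finset.univ : Finset (Finset (V₁ × V₂))).filter fun M =>
      M ⊆ T₁.subtree u ×ˢ T₂.subtree v ∧ AgreementPairs T₁ T₂ lab₁ lab₂ M).sup
    fun M => (M.filter fun p => lab₁ p.1 ≠ none).card

/-- A matching: a set of pairwise non-adjacent edges. -/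
def IsMatching {X Y : Type*} (M : Finset (X × Y)) : Prop :=
  ∀ e ∈ M, ∀ f ∈ M, e ≠ f → e.1 ≠ f.1 ∧ e.2 ≠ f.2

open scoped Classical in
/-- The weight `‖MWM(G_{uv})‖` of a maximum weight matching of the bipartite graph
`G_{uv}` between `C(u)` and `C(v)`, where edge `(x,y)` has weight `mast(T₁^x, T₂^y)`. -/
noncomputable def mwmG (T₁ : RTree V₁) (T₂ : RTree V₂)
    (lab₁ : V₁ → Option L) (lab₂ : V₂ → Option L) (u : V₁) (v : V₂) : ℕ :=
  ((Finset.univ : Finset (Finset (V₁ × V₂))).filter fun N =>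
      N ⊆ T₁.children u ×ˢ T₂.children v ∧ IsMatching N).sup
    fun N => ∑ p ∈ N, mast T₁ T₂ lab₁ lab₂ p.1 p.2

namespace RTree

section Ancestor

variable {V : Type*} (T : RTree V)

lemma anc_refl (a : V) : T.anc a a := ⟨0, rfl⟩

lemma anc_trans {a b c : V} (hab : T.anc a b) (hbc : T.anc b c) : T.anc a c := by
  obtain ⟨k, hk⟩ := hab
  obtain ⟨j, hj⟩ := hbc
  exact ⟨k + j, by rw [Function.iterate_add_apply, hj, hk]⟩

lemma anc_parent_of_anc_of_ne {a b : V} (h : T.anc a b) (hne : a ≠ b) : T.anc a (T.parent b) := by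
  obtain ⟨_ | k, hk⟩ := h
  · exact absurd hk hne.symm
  · exact ⟨k, by rwa [← Function.iterate_succ_apply]⟩

lemma eq_root_of_isPeriodicPt {a : V} {c : ℕ} (hc : 0 < c)
    (h : Function.IsPeriodicPt T.parent c a) : a = T.root := by
  obtain ⟨n, hn⟩ := T.reaches_root a
  have hroot : Function.IsFixedPt T.parent T.root := T.parent_root
  calc a = T.parent^[c * n] a := ((h.mul_const n).eq).symm
    _ = T.parent^[c * n - n] (T.parent^[n] a) := by
      rw [← Function.iterate_add_apply, Nat.sub_add_cancel (Nat.le_mul_of_pos_left n hc)]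
    _ = T.root := by rw [hn, (hroot.iterate _).eq]

lemma anc_antisymm {a b : V} (hab : T.anc a b) (hba : T.anc b a) : a = b := by
  obtain ⟨k, hk⟩ := hab
  obtain ⟨j, hj⟩ := hba
  rcases Nat.eq_zero_or_pos (k + j) with h | h
  · obtain ⟨rfl, rfl⟩ : k = 0 ∧ j = 0 := by omega
    exact hk.symm
  · have ha : Function.IsPeriodicPt T.parent (k + j) a := by
      rw [Function.IsPeriodicPt, Function.IsFixedPt, Function.iterate_add_apply, hj, hk]
    have hb : Function.IsPeriodicPt T.parent (j + k) b := by
      rw [Function.IsPeriodicPt, Function.IsFixedPt, Function.iterate_add_apply, hk, hj]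
    rw [T.eq_root_of_isPeriodicPt h ha, T.eq_root_of_isPeriodicPt (by omega) hb]

lemma anc_total {a c c' : V} (hc : T.anc c a) (hc' : T.anc c' a) :
    T.anc c c' ∨ T.anc c' c := by
  obtain ⟨k, hk⟩ := hc
  obtain ⟨j, hj⟩ := hc'
  rcases le_total k j with h | h
  · exact .inr ⟨j - k, by rw [← hk, ← Function.iterate_add_apply, Nat.sub_add_cancel h, hj]⟩
  · exact .inl ⟨k - j, by rw [← hj, ← Function.iterate_add_apply, Nat.sub_add_cancel h, hk]⟩

lemma exists_isLCA (a b : V) : ∃ c, T.IsLCA c a b := by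
  classical
  have hex : ∃ k, T.anc (T.parent^[k] a) b := by
    obtain ⟨n, hn⟩ := T.reaches_root a
    exact ⟨n, hn ▸ T.reaches_root b⟩
  refine ⟨T.parent^[Nat.find hex] a, ⟨_, rfl⟩, Nat.find_spec hex, ?_⟩
  rintro c' ⟨j, rfl⟩ hcb
  exact ⟨j - Nat.find hex, by
    rw [← Function.iterate_add_apply, Nat.sub_add_cancel (Nat.find_le hcb)]⟩

variable {T} in
lemma IsLCA.unique {c c' a b : V} (h : T.IsLCA c a b) (h' : T.IsLCA c' a b) : c = c' :=
  T.anc_antisymm (h'.2.2 c h.1 h.2.1) (h.2.2 c' h'.1 h'.2.1)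

lemma isLCA_self_left {a b : V} (h : T.anc a b) : T.IsLCA a a b :=
  ⟨T.anc_refl a, h, fun _ hc _ => hc⟩

lemma isLCA_self_right {a b : V} (h : T.anc b a) : T.IsLCA b a b :=
  ⟨h, T.anc_refl b, fun _ _ hc => hc⟩

end Ancestor

variable {V : Type*} [Fintype V] [DecidableEq V] (T : RTree V)

lemma mem_subtree {u a : V} : a ∈ T.subtree u ↔ T.anc u a := by
  simp [subtree, anc]

lemma mem_children {u x : V} : x ∈ T.children u ↔ T.parent x = u ∧ x ≠ u := by
  simp [children]

lemma mem_subtree_self (u : V) : u ∈ T.subtree u := T.mem_subtree.2 (T.anc_refl u)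

lemma anc_of_mem_children {u x : V} (hx : x ∈ T.children u) : T.anc u x :=
  ⟨1, (T.mem_children.1 hx).1⟩

lemma subtree_subset_of_mem_children {u x : V} (hx : x ∈ T.children u) :
    T.subtree x ⊆ T.subtree u := fun _ ha =>
  T.mem_subtree.2 (T.anc_trans (T.anc_of_mem_children hx) (T.mem_subtree.1 ha))

lemma notMem_subtree_of_mem_children {u x : V} (hx : x ∈ T.children u) : u ∉ T.subtree x :=
  fun h => (T.mem_children.1 hx).2 (T.anc_antisymm (T.mem_subtree.1 h) (T.anc_of_mem_children hx))

lemma mem_subtree_of_anc {x a b : V} (ha : a ∈ T.subtree x) (hab : T.anc a b) :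
    b ∈ T.subtree x :=
  T.mem_subtree.2 (T.anc_trans (T.mem_subtree.1 ha) hab)

variable {T} in
lemma IsLCA.mem_subtree {x a b c : V} (h : T.IsLCA c a b) (ha : a ∈ T.subtree x)
    (hb : b ∈ T.subtree x) : c ∈ T.subtree x :=
  T.mem_subtree.2 (h.2.2 x (T.mem_subtree.1 ha) (T.mem_subtree.1 hb))

lemma exists_mem_children_of_mem_subtree {u a : V} (ha : a ∈ T.subtree u) (hne : a ≠ u) :
    ∃ x ∈ T.children u, a ∈ T.subtree x := by
  classical
  have hex : ∃ k, T.parent^[k] a = u := T.mem_subtree.1 ha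
  obtain ⟨k, hk⟩ : ∃ k, Nat.find hex = k + 1 :=
    Nat.exists_eq_succ_of_ne_zero fun h => hne (by simpa [h] using Nat.find_spec hex)
  refine ⟨T.parent^[k] a, T.mem_children.2 ⟨?_, ?_⟩, T.mem_subtree.2 ⟨k, rfl⟩⟩
  · have h := Nat.find_spec hex
    rwa [hk, Function.iterate_succ_apply'] at h
  · exact Nat.find_min hex (by omega)

lemma eq_of_anc_of_mem_children {u x x' : V} (hx : x ∈ T.children u) (hx' : x' ∈ T.children u)
    (h : T.anc x x') : x = x' := by
  by_contra hne
  have hxu : T.anc x u := (T.mem_children.1 hx').1 ▸ T.anc_parent_of_anc_of_ne h hne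
  exact T.notMem_subtree_of_mem_children hx (T.mem_subtree.2 hxu)

lemma disjoint_subtree_of_mem_children {u x x' : V} (hx : x ∈ T.children u)
    (hx' : x' ∈ T.children u) (hne : x ≠ x') : Disjoint (T.subtree x) (T.subtree x') := by
  refine Finset.disjoint_left.2 fun a ha ha' => hne ?_
  rcases T.anc_total (T.mem_subtree.1 ha) (T.mem_subtree.1 ha') with h | h
  · exact T.eq_of_anc_of_mem_children hx hx' h
  · exact (T.eq_of_anc_of_mem_children hx' hx h).symm

lemma isLCA_of_mem_subtree_of_ne {u x x' a b : V} (hx : x ∈ T.children u)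
    (hx' : x' ∈ T.children u) (hne : x ≠ x') (ha : a ∈ T.subtree x) (hb : b ∈ T.subtree x') :
    T.IsLCA u a b := by
  have hxb : ¬ T.anc x b := fun h =>
    Finset.disjoint_left.1 (T.disjoint_subtree_of_mem_children hx hx' hne) (T.mem_subtree.2 h) hb
  refine ⟨T.mem_subtree.1 (T.subtree_subset_of_mem_children hx ha),
    T.mem_subtree.1 (T.subtree_subset_of_mem_children hx' hb), fun c hca hcb => ?_⟩
  rcases T.anc_total hca (T.mem_subtree.1 ha) with h | h
  · by_cases hcx : c = x
    · exact absurd (hcx ▸ hcb) hxb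
    · exact (T.mem_children.1 hx).1 ▸ T.anc_parent_of_anc_of_ne h hcx
  · exact absurd (T.anc_trans h hcb) hxb

lemma isLCA_iff_ne {u x x' a b : V} (hx : x ∈ T.children u) (hx' : x' ∈ T.children u)
    (ha : a ∈ T.subtree x) (hb : b ∈ T.subtree x') : T.IsLCA u a b ↔ x ≠ x' := by
  refine ⟨fun h hxx => ?_, fun hne => T.isLCA_of_mem_subtree_of_ne hx hx' hne ha hb⟩
  exact T.notMem_subtree_of_mem_children hx (h.mem_subtree ha (hxx ▸ hb))

end RTree

section Matching

variable {X Y : Type*}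

lemma IsMatching.subset {M S : Finset (X × Y)} (hM : IsMatching M) (hS : S ⊆ M) :
    IsMatching S :=
  fun e he f hf => hM e (hS he) f (hS hf)

variable [DecidableEq X] [DecidableEq Y]

lemma IsMatching.insert {M : Finset (X × Y)} {a : X × Y} (hM : IsMatching M)
    (ha : ∀ p ∈ M, p.1 ≠ a.1 ∧ p.2 ≠ a.2) : IsMatching (insert a M) := by
  intro e he f hf hef
  rcases Finset.mem_insert.1 he with hea | he <;> rcases Finset.mem_insert.1 hf with hfa | hf
  · exact absurd (hea.trans hfa.symm) hef
  · rw [hea]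
    exact (ha f hf).imp Ne.symm Ne.symm
  · rw [hfa]
    exact ha e he
  · exact hM e he f hf hef

lemma IsMatching.biUnion {ι : Type*} {N : Finset ι} {F : ι → Finset (X × Y)}
    (hF : ∀ i ∈ N, IsMatching (F i))
    (hcross : ∀ i ∈ N, ∀ j ∈ N, i ≠ j → ∀ p ∈ F i, ∀ q ∈ F j, p.1 ≠ q.1 ∧ p.2 ≠ q.2) :
    IsMatching (N.biUnion F) := by
  intro p hp q hq hpq
  obtain ⟨i, hi, hpi⟩ := Finset.mem_biUnion.1 hp
  obtain ⟨j, hj, hqj⟩ := Finset.mem_biUnion.1 hq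
  by_cases hij : i = j
  · exact hF i hi p hpi q (hij ▸ hqj) hpq
  · exact hcross i hi j hj hij p hpi q hqj

end Matching

open scoped Classical in
/-- The quantity maximized in `mast`: agreement pairs carry equal labels, so this counts the
labeled nodes of the agreement subtree. -/
noncomputable def numLabeled {α β L : Type*} (lab : α → Option L) (M : Finset (α × β)) : ℕ :=
  (M.filter fun p => lab p.1 ≠ none).card

section NumLabeled

variable {α β L : Type*} (lab : α → Option L)

lemma numLabeled_mono {M S : Finset (α × β)} (h : S ⊆ M) : numLabeled lab S ≤ numLabeled lab M :=
  Finset.card_le_card (Finset.filter_subset_filter _ h)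

variable [DecidableEq α] [DecidableEq β]

open scoped Classical in
lemma numLabeled_insert {M : Finset (α × β)} {a : α × β} (ha : a ∉ M) :
    numLabeled lab (insert a M) = numLabeled lab M + if lab a.1 ≠ none then 1 else 0 := by
  unfold numLabeled
  rw [Finset.filter_insert]
  split_ifs with h
  · exact Finset.card_insert_of_notMem fun h' => ha (Finset.mem_of_mem_filter a h')
  · rfl

lemma numLabeled_biUnion_le {ι : Type*} (N : Finset ι) (F : ι → Finset (α × β)) :
    numLabeled lab (N.biUnion F) ≤ ∑ i ∈ N, numLabeled lab (F i) := by
  unfold numLabeled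
  rw [Finset.filter_biUnion]
  exact Finset.card_biUnion_le

lemma numLabeled_biUnion {ι : Type*} {N : Finset ι} {F : ι → Finset (α × β)}
    (h : (N : Set ι).PairwiseDisjoint F) :
    numLabeled lab (N.biUnion F) = ∑ i ∈ N, numLabeled lab (F i) := by
  unfold numLabeled
  rw [Finset.filter_biUnion, Finset.card_biUnion]
  exact fun i hi j hj hij => Finset.disjoint_filter_filter (h hi hj hij)

end NumLabeled

section Agreement

variable {α β : Type*} {T₁ : RTree α} {T₂ : RTree β} {lab₁ : α → Option L}
  {lab₂ : β → Option L} {M : Finset (α × β)}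

/-- LCAs are unique and `M` is a partial bijection, so closure under pairs of LCAs gives both
LCA conditions of `AgreementPairs`. -/
lemma agreementPairs_of_isLCA_mem (hM : IsMatching M) (hlab : ∀ p ∈ M, lab₁ p.1 = lab₂ p.2)
    (hlca : ∀ p ∈ M, ∀ q ∈ M, ∃ c c', T₁.IsLCA c p.1 q.1 ∧ T₂.IsLCA c' p.2 q.2 ∧ (c, c') ∈ M) :
    AgreementPairs T₁ T₂ lab₁ lab₂ M := by
  refine ⟨hM, hlab, fun p hp q hq r hr => ?_, fun p hp q hq d d' hd hd' => ?_⟩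
  · obtain ⟨c, c', hc, hc', hcM⟩ := hlca p hp q hq
    have h₁ : T₁.IsLCA r.1 p.1 q.1 ↔ r = (c, c') :=
      ⟨fun h => by_contra fun hne => (hM r hr _ hcM hne).1 (h.unique hc), fun h => h ▸ hc⟩
    have h₂ : T₂.IsLCA r.2 p.2 q.2 ↔ r = (c, c') :=
      ⟨fun h => by_contra fun hne => (hM r hr _ hcM hne).2 (h.unique hc'), fun h => h ▸ hc'⟩
    rw [h₁, h₂]
  · obtain ⟨c, c', hc, hc', hcM⟩ := hlca p hp q hq
    rwa [hd.unique hc, hd'.unique hc']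

lemma AgreementPairs.exists_anc_forall (hA : AgreementPairs T₁ T₂ lab₁ lab₂ M)
    (hne : M.Nonempty) : ∃ r ∈ M, ∀ p ∈ M, T₁.anc r.1 p.1 ∧ T₂.anc r.2 p.2 := by
  suffices ∀ S ⊆ M, S.Nonempty → ∃ r ∈ M, ∀ p ∈ S, T₁.anc r.1 p.1 ∧ T₂.anc r.2 p.2 from
    this M subset_rfl hne
  intro S hS hSne
  induction hSne using Finset.Nonempty.cons_induction with
  | singleton a =>
    refine ⟨a, hS (Finset.mem_singleton_self a), fun p hp => ?_⟩
    rw [Finset.mem_singleton.1 hp]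
    exact ⟨T₁.anc_refl _, T₂.anc_refl _⟩
  | cons a S ha _ ih =>
    have haM : a ∈ M := hS (Finset.mem_cons_self a S)
    obtain ⟨r, hr, hrS⟩ := ih ((Finset.subset_cons ha).trans hS)
    obtain ⟨c, hc⟩ := T₁.exists_isLCA a.1 r.1
    obtain ⟨c', hc'⟩ := T₂.exists_isLCA a.2 r.2
    refine ⟨(c, c'), hA.2.2.2 a haM r hr c c' hc hc', fun p hp => ?_⟩
    rcases Finset.mem_cons.1 hp with rfl | hp
    · exact ⟨hc.1, hc'.1⟩
    · exact ⟨T₁.anc_trans hc.2.1 (hrS p hp).1, T₂.anc_trans hc'.2.1 (hrS p hp).2⟩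

end Agreement

section AgreementBelow

variable {T₁ : RTree V₁} {T₂ : RTree V₂} {lab₁ : V₁ → Option L} {lab₂ : V₂ → Option L}
  {M : Finset (V₁ × V₂)}

lemma AgreementPairs.filter_subtree (hA : AgreementPairs T₁ T₂ lab₁ lab₂ M) (x : V₁) (y : V₂) :
    AgreementPairs T₁ T₂ lab₁ lab₂ (M.filter fun p => p.1 ∈ T₁.subtree x ∧ p.2 ∈ T₂.subtree y) := by
  refine agreementPairs_of_isLCA_mem (IsMatching.subset hA.1 (Finset.filter_subset _ _))
    (fun p hp => hA.2.1 p (Finset.mem_of_mem_filter p hp)) fun p hp q hq => ?_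
  rw [Finset.mem_filter] at hp hq
  obtain ⟨c, hc⟩ := T₁.exists_isLCA p.1 q.1
  obtain ⟨c', hc'⟩ := T₂.exists_isLCA p.2 q.2
  exact ⟨c, c', hc, hc', Finset.mem_filter.2 ⟨hA.2.2.2 p hp.1 q hq.1 c c' hc hc',
    hc.mem_subtree hp.2.1 hq.2.1, hc'.mem_subtree hp.2.2 hq.2.2⟩⟩

lemma AgreementPairs.eq_empty_or_subset_child_or_root_mem
    (hA : AgreementPairs T₁ T₂ lab₁ lab₂ M) {u : V₁} {v : V₂}
    (hM : M ⊆ T₁.subtree u ×ˢ T₂.subtree v) :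
    M = ∅ ∨ (∃ y ∈ T₂.children v, M ⊆ T₁.subtree u ×ˢ T₂.subtree y) ∨
      (∃ x ∈ T₁.children u, M ⊆ T₁.subtree x ×ˢ T₂.subtree v) ∨ (u, v) ∈ M := by
  rcases M.eq_empty_or_nonempty with h | hne
  · exact .inl h
  obtain ⟨r, hr, hrM⟩ := hA.exists_anc_forall hne
  obtain ⟨hr₁, hr₂⟩ := Finset.mem_product.1 (hM hr)
  by_cases h₂ : r.2 = v
  · by_cases h₁ : r.1 = u
    · exact .inr (.inr (.inr ((Prod.ext h₁ h₂ : r = (u, v)) ▸ hr)))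
    obtain ⟨x, hx, hrx⟩ := T₁.exists_mem_children_of_mem_subtree hr₁ h₁
    refine .inr (.inr (.inl ⟨x, hx, fun p hp => Finset.mem_product.2
      ⟨T₁.mem_subtree_of_anc hrx (hrM p hp).1, (Finset.mem_product.1 (hM hp)).2⟩⟩))
  · obtain ⟨y, hy, hry⟩ := T₂.exists_mem_children_of_mem_subtree hr₂ h₂
    refine .inr (.inl ⟨y, hy, fun p hp => Finset.mem_product.2
      ⟨(Finset.mem_product.1 (hM hp)).1, T₂.mem_subtree_of_anc hry (hrM p hp).2⟩⟩)

end AgreementBelow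

section Mast

variable (T₁ : RTree V₁) (T₂ : RTree V₂) (lab₁ : V₁ → Option L) (lab₂ : V₂ → Option L)

open scoped Classical in
lemma le_mast {u : V₁} {v : V₂} {M : Finset (V₁ × V₂)} (hM : M ⊆ T₁.subtree u ×ˢ T₂.subtree v)
    (hA : AgreementPairs T₁ T₂ lab₁ lab₂ M) : numLabeled lab₁ M ≤ mast T₁ T₂ lab₁ lab₂ u v := by
  unfold mast
  exact Finset.le_sup (f := numLabeled lab₁) (Finset.mem_filter.2 ⟨Finset.mem_univ M, hM, hA⟩)

open scoped Classical in
lemma mast_le {u : V₁} {v : V₂} {n : ℕ}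
    (h : ∀ M : Finset (V₁ × V₂), M ⊆ T₁.subtree u ×ˢ T₂.subtree v →
      AgreementPairs T₁ T₂ lab₁ lab₂ M → numLabeled lab₁ M ≤ n) :
    mast T₁ T₂ lab₁ lab₂ u v ≤ n := by
  unfold mast
  exact Finset.sup_le fun M hM => (Finset.mem_filter.1 hM).2.elim (h M)

open scoped Classical in
lemma exists_numLabeled_eq_mast (u : V₁) (v : V₂) :
    ∃ M ⊆ T₁.subtree u ×ˢ T₂.subtree v, AgreementPairs T₁ T₂ lab₁ lab₂ M ∧
      numLabeled lab₁ M = mast T₁ T₂ lab₁ lab₂ u v := by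
  unfold mast
  obtain ⟨M, hM, hsup⟩ := Finset.exists_mem_eq_sup (Finset.univ.filter fun M =>
      M ⊆ T₁.subtree u ×ˢ T₂.subtree v ∧ AgreementPairs T₁ T₂ lab₁ lab₂ M)
    ⟨∅, Finset.mem_filter.2 ⟨Finset.mem_univ _, Finset.empty_subset _,
      agreementPairs_of_isLCA_mem (fun _ h => absurd h (Finset.notMem_empty _))
        (fun _ h => absurd h (Finset.notMem_empty _))
        (fun _ h => absurd h (Finset.notMem_empty _))⟩⟩ (numLabeled lab₁)
  exact ⟨M, (Finset.mem_filter.1 hM).2.1, (Finset.mem_filter.1 hM).2.2, hsup.symm⟩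

lemma mast_mono {u u' : V₁} {v v' : V₂} (hu : T₁.subtree u ⊆ T₁.subtree u')
    (hv : T₂.subtree v ⊆ T₂.subtree v') :
    mast T₁ T₂ lab₁ lab₂ u v ≤ mast T₁ T₂ lab₁ lab₂ u' v' :=
  mast_le T₁ T₂ lab₁ lab₂ fun _ hM hA =>
    le_mast T₁ T₂ lab₁ lab₂ (hM.trans (Finset.product_subset_product hu hv)) hA

open scoped Classical in
lemma le_mwmG {u : V₁} {v : V₂} {N : Finset (V₁ × V₂)}
    (hN : N ⊆ T₁.children u ×ˢ T₂.children v) (hNm : IsMatching N) :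
    ∑ e ∈ N, mast T₁ T₂ lab₁ lab₂ e.1 e.2 ≤ mwmG T₁ T₂ lab₁ lab₂ u v := by
  unfold mwmG
  exact Finset.le_sup (f := fun N : Finset (V₁ × V₂) => ∑ e ∈ N, mast T₁ T₂ lab₁ lab₂ e.1 e.2)
    (Finset.mem_filter.2 ⟨Finset.mem_univ N, hN, hNm⟩)

open scoped Classical in
lemma exists_sum_mast_eq_mwmG (u : V₁) (v : V₂) :
    ∃ N ⊆ T₁.children u ×ˢ T₂.children v, IsMatching N ∧
      ∑ e ∈ N, mast T₁ T₂ lab₁ lab₂ e.1 e.2 = mwmG T₁ T₂ lab₁ lab₂ u v := by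
  unfold mwmG
  obtain ⟨N, hN, hsup⟩ := Finset.exists_mem_eq_sup (Finset.univ.filter fun N =>
      N ⊆ T₁.children u ×ˢ T₂.children v ∧ IsMatching N)
    ⟨∅, Finset.mem_filter.2 ⟨Finset.mem_univ _, Finset.empty_subset _,
      fun _ h => absurd h (Finset.notMem_empty _)⟩⟩
    (fun N : Finset (V₁ × V₂) => ∑ e ∈ N, mast T₁ T₂ lab₁ lab₂ e.1 e.2)
  exact ⟨N, (Finset.mem_filter.1 hN).2.1, (Finset.mem_filter.1 hN).2.2, hsup.symm⟩

end Mast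

section Recurrence

variable {T₁ : RTree V₁} {T₂ : RTree V₂} {lab₁ : V₁ → Option L} {lab₂ : V₂ → Option L}
  {u : V₁} {v : V₂} {N : Finset (V₁ × V₂)} {F : V₁ × V₂ → Finset (V₁ × V₂)}

lemma isMatching_insert_biUnion (hN : N ⊆ T₁.children u ×ˢ T₂.children v) (hNm : IsMatching N)
    (hFsub : ∀ e ∈ N, F e ⊆ T₁.subtree e.1 ×ˢ T₂.subtree e.2) (hF : ∀ e ∈ N, IsMatching (F e)) :
    IsMatching (insert (u, v) (N.biUnion F)) := by
  refine (IsMatching.biUnion hF fun e he f hf hef p hp q hq => ?_).insert fun p hp => ?_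
  · obtain ⟨hx, hy⟩ := Finset.mem_product.1 (hN he)
    obtain ⟨hx', hy'⟩ := Finset.mem_product.1 (hN hf)
    obtain ⟨hp₁, hp₂⟩ := Finset.mem_product.1 (hFsub e he hp)
    obtain ⟨hq₁, hq₂⟩ := Finset.mem_product.1 (hFsub f hf hq)
    exact ⟨(T₁.disjoint_subtree_of_mem_children hx hx' (hNm e he f hf hef).1).forall_ne_finset
        hp₁ hq₁,
      (T₂.disjoint_subtree_of_mem_children hy hy' (hNm e he f hf hef).2).forall_ne_finset
        hp₂ hq₂⟩
  · obtain ⟨e, he, hpe⟩ := Finset.mem_biUnion.1 hp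
    obtain ⟨hx, hy⟩ := Finset.mem_product.1 (hN he)
    obtain ⟨hp₁, hp₂⟩ := Finset.mem_product.1 (hFsub e he hpe)
    exact ⟨fun (h : p.1 = u) => T₁.notMem_subtree_of_mem_children hx (h ▸ hp₁),
      fun (h : p.2 = v) => T₂.notMem_subtree_of_mem_children hy (h ▸ hp₂)⟩

lemma agreementPairs_insert_biUnion (hlab : lab₁ u = lab₂ v)
    (hN : N ⊆ T₁.children u ×ˢ T₂.children v) (hNm : IsMatching N)
    (hFsub : ∀ e ∈ N, F e ⊆ T₁.subtree e.1 ×ˢ T₂.subtree e.2)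
    (hF : ∀ e ∈ N, AgreementPairs T₁ T₂ lab₁ lab₂ (F e)) :
    AgreementPairs T₁ T₂ lab₁ lab₂ (insert (u, v) (N.biUnion F)) := by
  have hanc : ∀ q ∈ insert (u, v) (N.biUnion F), T₁.anc u q.1 ∧ T₂.anc v q.2 := by
    intro q hq
    rcases Finset.mem_insert.1 hq with rfl | hq
    · exact ⟨T₁.anc_refl u, T₂.anc_refl v⟩
    obtain ⟨e, he, hqe⟩ := Finset.mem_biUnion.1 hq
    obtain ⟨hx, hy⟩ := Finset.mem_product.1 (hN he)
    obtain ⟨hq₁, hq₂⟩ := Finset.mem_product.1 (hFsub e he hqe)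
    exact ⟨T₁.mem_subtree.1 (T₁.subtree_subset_of_mem_children hx hq₁),
      T₂.mem_subtree.1 (T₂.subtree_subset_of_mem_children hy hq₂)⟩
  have hroot : (u, v) ∈ insert (u, v) (N.biUnion F) := Finset.mem_insert_self _ _
  refine agreementPairs_of_isLCA_mem
    (isMatching_insert_biUnion hN hNm hFsub fun e he => (hF e he).1) (fun p hp => ?_)
    fun p hp q hq => ?_
  · rcases Finset.mem_insert.1 hp with rfl | hp
    · exact hlab
    obtain ⟨e, he, hpe⟩ := Finset.mem_biUnion.1 hp
    exact (hF e he).2.1 p hpe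
  rcases Finset.mem_insert.1 hp with rfl | hp'
  · exact ⟨_, _, T₁.isLCA_self_left (hanc q hq).1, T₂.isLCA_self_left (hanc q hq).2, hroot⟩
  rcases Finset.mem_insert.1 hq with rfl | hq'
  · exact ⟨_, _, T₁.isLCA_self_right (hanc p hp).1, T₂.isLCA_self_right (hanc p hp).2, hroot⟩
  obtain ⟨e, he, hpe⟩ := Finset.mem_biUnion.1 hp'
  obtain ⟨f, hf, hqf⟩ := Finset.mem_biUnion.1 hq'
  by_cases hef : e = f
  · subst hef
    obtain ⟨c, hc⟩ := T₁.exists_isLCA p.1 q.1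
    obtain ⟨c', hc'⟩ := T₂.exists_isLCA p.2 q.2
    exact ⟨c, c', hc, hc', Finset.mem_insert_of_mem (Finset.mem_biUnion.2
      ⟨e, he, (hF e he).2.2.2 p hpe q hqf c c' hc hc'⟩)⟩
  obtain ⟨hx, hy⟩ := Finset.mem_product.1 (hN he)
  obtain ⟨hx', hy'⟩ := Finset.mem_product.1 (hN hf)
  obtain ⟨hp₁, hp₂⟩ := Finset.mem_product.1 (hFsub e he hpe)
  obtain ⟨hq₁, hq₂⟩ := Finset.mem_product.1 (hFsub f hf hqf)
  exact ⟨u, v, T₁.isLCA_of_mem_subtree_of_ne hx hx' (hNm e he f hf hef).1 hp₁ hq₁,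
    T₂.isLCA_of_mem_subtree_of_ne hy hy' (hNm e he f hf hef).2 hp₂ hq₂, hroot⟩

variable (T₁ T₂ lab₁ lab₂) in
open scoped Classical in
lemma mwmG_add_le_mast (hlab : lab₁ u = lab₂ v) :
    mwmG T₁ T₂ lab₁ lab₂ u v + (if lab₁ u ≠ none then 1 else 0) ≤ mast T₁ T₂ lab₁ lab₂ u v := by
  obtain ⟨N, hN, hNm, hNsum⟩ := exists_sum_mast_eq_mwmG T₁ T₂ lab₁ lab₂ u v
  choose F hFsub hF hFnum using fun e : V₁ × V₂ => exists_numLabeled_eq_mast T₁ T₂ lab₁ lab₂ e.1 e.2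
  have hroot : (u, v) ∉ N.biUnion F := fun h => by
    obtain ⟨e, he, hue⟩ := Finset.mem_biUnion.1 h
    exact T₁.notMem_subtree_of_mem_children (Finset.mem_product.1 (hN he)).1
      (Finset.mem_product.1 (hFsub e hue)).1
  have hdisj : (N : Set (V₁ × V₂)).PairwiseDisjoint F := fun e he f hf hef =>
    Finset.disjoint_left.2 fun p hpe hpf =>
      (T₁.disjoint_subtree_of_mem_children (Finset.mem_product.1 (hN he)).1
        (Finset.mem_product.1 (hN hf)).1 (hNm e he f hf hef).1).forall_ne_finset
        (Finset.mem_product.1 (hFsub e hpe)).1 (Finset.mem_product.1 (hFsub f hpf)).1 rfl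
  have hsub : insert (u, v) (N.biUnion F) ⊆ T₁.subtree u ×ˢ T₂.subtree v := by
    refine Finset.insert_subset
      (Finset.mk_mem_product (T₁.mem_subtree_self u) (T₂.mem_subtree_self v))
      (Finset.biUnion_subset.2 fun e he => (hFsub e).trans ?_)
    obtain ⟨hx, hy⟩ := Finset.mem_product.1 (hN he)
    exact Finset.product_subset_product (T₁.subtree_subset_of_mem_children hx)
      (T₂.subtree_subset_of_mem_children hy)
  calc mwmG T₁ T₂ lab₁ lab₂ u v + (if lab₁ u ≠ none then 1 else 0)
      = numLabeled lab₁ (insert (u, v) (N.biUnion F)) := by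
        rw [numLabeled_insert _ hroot, numLabeled_biUnion _ hdisj, ← hNsum]
        simp only [hFnum]
    _ ≤ mast T₁ T₂ lab₁ lab₂ u v := le_mast T₁ T₂ lab₁ lab₂ hsub
        (agreementPairs_insert_biUnion hlab hN hNm (fun e _ => hFsub e) fun e _ => hF e)

open scoped Classical in
lemma numLabeled_le_mwmG_add {M : Finset (V₁ × V₂)} (hA : AgreementPairs T₁ T₂ lab₁ lab₂ M)
    (hM : M ⊆ T₁.subtree u ×ˢ T₂.subtree v) (huv : (u, v) ∈ M) :
    numLabeled lab₁ M ≤ mwmG T₁ T₂ lab₁ lab₂ u v + if lab₁ u ≠ none then 1 else 0 := by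
  let block : V₁ × V₂ → Finset (V₁ × V₂) := fun e =>
    M.filter fun p => p.1 ∈ T₁.subtree e.1 ∧ p.2 ∈ T₂.subtree e.2
  let N := (T₁.children u ×ˢ T₂.children v).filter fun e => (block e).Nonempty
  have hcover : M.erase (u, v) ⊆ N.biUnion block := by
    intro p hp
    obtain ⟨hpne, hpM⟩ := Finset.mem_erase.1 hp
    obtain ⟨hp₁, hp₂⟩ := Finset.mem_product.1 (hM hpM)
    obtain ⟨h₁, h₂⟩ := hA.1 p hpM _ huv hpne
    obtain ⟨x, hx, hpx⟩ := T₁.exists_mem_children_of_mem_subtree hp₁ h₁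
    obtain ⟨y, hy, hpy⟩ := T₂.exists_mem_children_of_mem_subtree hp₂ h₂
    have hpb : p ∈ block (x, y) := Finset.mem_filter.2 ⟨hpM, hpx, hpy⟩
    exact Finset.mem_biUnion.2
      ⟨(x, y), Finset.mem_filter.2 ⟨Finset.mk_mem_product hx hy, p, hpb⟩, hpb⟩
  have hNm : IsMatching N := by
    intro e he f hf hef
    obtain ⟨he', p, hp⟩ := Finset.mem_filter.1 he
    obtain ⟨hf', q, hq⟩ := Finset.mem_filter.1 hf
    obtain ⟨hpM, hp₁, hp₂⟩ := Finset.mem_filter.1 hp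
    obtain ⟨hqM, hq₁, hq₂⟩ := Finset.mem_filter.1 hq
    have hsep := hA.2.2.1 p hpM q hqM (u, v) huv
    rw [T₁.isLCA_iff_ne (Finset.mem_product.1 he').1 (Finset.mem_product.1 hf').1 hp₁ hq₁,
      T₂.isLCA_iff_ne (Finset.mem_product.1 he').2 (Finset.mem_product.1 hf').2 hp₂ hq₂] at hsep
    exact ⟨fun h => hef (Prod.ext h (by tauto)), fun h => hef (Prod.ext (by tauto) h)⟩
  have herase := numLabeled_insert lab₁ (Finset.notMem_erase (u, v) M)
  rw [Finset.insert_erase huv] at herase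
  calc numLabeled lab₁ M
      = numLabeled lab₁ (M.erase (u, v)) + if lab₁ u ≠ none then 1 else 0 := herase
    _ ≤ mwmG T₁ T₂ lab₁ lab₂ u v + if lab₁ u ≠ none then 1 else 0 := by
      gcongr
      calc numLabeled lab₁ (M.erase (u, v))
          ≤ ∑ e ∈ N, numLabeled lab₁ (block e) :=
            (numLabeled_mono _ hcover).trans (numLabeled_biUnion_le _ _ _)
        _ ≤ ∑ e ∈ N, mast T₁ T₂ lab₁ lab₂ e.1 e.2 :=
            Finset.sum_le_sum fun e _ => le_mast T₁ T₂ lab₁ lab₂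
              (fun p hp => Finset.mem_product.2 (Finset.mem_filter.1 hp).2)
              (hA.filter_subtree e.1 e.2)
        _ ≤ mwmG T₁ T₂ lab₁ lab₂ u v := le_mwmG T₁ T₂ lab₁ lab₂ (Finset.filter_subset _ _) hNm

end Recurrence

open scoped Classical in
/-- The MAST recurrence: `mast(T₁^u, T₂^v)` is the maximum of
(a) `max_{x ∈ C(v)} mast(T₁^u, T₂^x)`, (b) `max_{x ∈ C(u)} mast(T₁^x, T₂^v)`, and
(c) `‖MWM(G_{uv})‖` if `u, v` are both unlabeled, `‖MWM(G_{uv})‖ + 1` if `u, v` carry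
the same label (option (c) being unavailable otherwise). -/
theorem mast_recurrence (T₁ : RTree V₁) (T₂ : RTree V₂)
    (lab₁ : V₁ → Option L) (lab₂ : V₂ → Option L) (u : V₁) (v : V₂) :
    mast T₁ T₂ lab₁ lab₂ u v =
      max ((T₂.children v).sup fun x => mast T₁ T₂ lab₁ lab₂ u x)
        (max ((T₁.children u).sup fun x => mast T₁ T₂ lab₁ lab₂ x v)
          (if lab₁ u = none ∧ lab₂ v = none then mwmG T₁ T₂ lab₁ lab₂ u v
           else if lab₁ u = lab₂ v ∧ lab₁ u ≠ none then mwmG T₁ T₂ lab₁ lab₂ u v + 1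
           else 0)) := by
  have hroot (hlab : lab₁ u = lab₂ v) (m : ℕ) :
      (if lab₁ u = none ∧ lab₂ v = none then m
       else if lab₁ u = lab₂ v ∧ lab₁ u ≠ none then m + 1 else 0) =
        m + if lab₁ u ≠ none then 1 else 0 := by
    by_cases hu : lab₁ u = none <;> simp [hu, ← hlab]
  refine le_antisymm (mast_le T₁ T₂ lab₁ lab₂ fun M hM hA => ?_) (max_le ?_ (max_le ?_ ?_))
  · rcases hA.eq_empty_or_subset_child_or_root_mem hM with rfl | ⟨y, hy, hMy⟩ | ⟨x, hx, hMx⟩ | huv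
    · simp [numLabeled]
    · exact le_max_of_le_left ((le_mast T₁ T₂ lab₁ lab₂ hMy hA).trans
        (Finset.le_sup (f := fun y => mast T₁ T₂ lab₁ lab₂ u y) hy))
    · exact le_max_of_le_right (le_max_of_le_left ((le_mast T₁ T₂ lab₁ lab₂ hMx hA).trans
        (Finset.le_sup (f := fun x => mast T₁ T₂ lab₁ lab₂ x v) hx)))
    · rw [hroot (hA.2.1 _ huv)]
      exact le_max_of_le_right (le_max_of_le_right (numLabeled_le_mwmG_add hA hM huv))
  · exact Finset.sup_le fun y hy =>
      mast_mono T₁ T₂ lab₁ lab₂ subset_rfl (T₂.subtree_subset_of_mem_children hy)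
  · exact Finset.sup_le fun x hx =>
      mast_mono T₁ T₂ lab₁ lab₂ (T₁.subtree_subset_of_mem_children hx) subset_rfl
  · by_cases hlab : lab₁ u = lab₂ v
    · rw [hroot hlab]
      exact mwmG_add_le_mast T₁ T₂ lab₁ lab₂ hlab
    · rw [if_neg fun h => hlab (h.1.trans h.2.symm), if_neg fun h => hlab h.1]
      exact Nat.zero_le _
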